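/- arXiv:2309.16044 — 5 statements merged into one kernel-verified Lean document; each statement's English description precedes it below -/
import Mathlib

section
/- For every real number x ≥ 0, erfi(x) ≥ exp(x² − x) − 1. -/
/-- The imaginary error function, `erfi x = ∫ u in 0..x, exp (u²)`
(the conventional erfi scaled by `√π / 2`). -/
noncomputable def erfi (x : ℝ) : ℝ := ∫ u in (0:ℝ)..x, Real.exp (u ^ 2)

theorem erfi_ge_exp_sub (x : ℝ) (hx : 0 ≤ x) :
    erfi x ≥ Real.exp (x ^ 2 - x) - 1 := by
  have hderiv : ∀ u : ℝ, HasDerivAt (fun u : ℝ => Real.exp (u ^ 2 - u))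
      ((2 * u - 1) * Real.exp (u ^ 2 - u)) u := by
    intro u
    have h1 : HasDerivAt (fun u : ℝ => u ^ 2 - u) (2 * u - 1) u := by
      have h := (hasDerivAt_pow 2 u).sub (hasDerivAt_id u)
      norm_num at h
      exact h
    have h2 := h1.exp
    convert h2 using 1
    ring
  have hcont : Continuous fun u : ℝ => (2 * u - 1) * Real.exp (u ^ 2 - u) := by
    continuity
  have h1 : (∫ u in (0:ℝ)..x, (2 * u - 1) * Real.exp (u ^ 2 - u))
      = Real.exp (x ^ 2 - x) - 1 := by
    rw [intervalIntegral.integral_eq_sub_of_hasDerivAt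
      (fun u _ => hderiv u) (hcont.intervalIntegrable 0 x)]
    norm_num
  have h2 : (∫ u in (0:ℝ)..x, (2 * u - 1) * Real.exp (u ^ 2 - u))
      ≤ ∫ u in (0:ℝ)..x, Real.exp (u ^ 2) := by
    apply intervalIntegral.integral_mono_on hx
      (hcont.intervalIntegrable 0 x)
      ((Real.continuous_exp.comp (continuous_pow 2)).intervalIntegrable 0 x)
    intro u _
    have hexp : u / 2 + 1 ≤ Real.exp (u / 2) := Real.add_one_le_exp _
    have hpos : (0:ℝ) < Real.exp (u ^ 2 - u) := Real.exp_pos _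
    have h3 : 2 * u - 1 ≤ Real.exp u := by
      have : Real.exp u = Real.exp (u / 2) * Real.exp (u / 2) := by
        rw [← Real.exp_add]; ring_nf
      nlinarith [Real.exp_pos (u / 2), sq_nonneg (Real.exp (u / 2) - u / 2 - 1),
        sq_nonneg (u - 2)]
    calc (2 * u - 1) * Real.exp (u ^ 2 - u) ≤ Real.exp u * Real.exp (u ^ 2 - u) := by
          nlinarith
      _ = Real.exp (u ^ 2) := by rw [← Real.exp_add]; ring_nf
  unfold erfi
  linarith
end

section
/- For all real numbers x and y with x ≥ 0 and erfi(x) = y, one has x ≤ 1 + √(log(y + 1)). (Equivalently, erfi⁻¹(y) ≤ 1 + √(log(y + 1)) for every y ≥ 0.) -/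
open Real

lemma continuous_exp_sq : Continuous fun u : ℝ => exp (u ^ 2) := by fun_prop

lemma erfi_nonneg {x : ℝ} (hx : 0 ≤ x) : 0 ≤ erfi x :=
  intervalIntegral.integral_nonneg hx fun _ _ => (exp_pos _).le

lemma hasDerivAt_exp_sub_one_sq (u : ℝ) :
    HasDerivAt (fun t : ℝ => exp ((t - 1) ^ 2)) (2 * (u - 1) * exp ((u - 1) ^ 2)) u := by
  have hsq : HasDerivAt (fun t : ℝ => (t - 1) ^ 2) (2 * (u - 1)) u := by
    simpa [Pi.pow_def] using ((hasDerivAt_id u).sub_const 1).pow 2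
  simpa [mul_comm, Function.comp_def] using (hasDerivAt_exp _).comp u hsq

lemma two_mul_sub_one_mul_exp_sub_one_sq_le (u : ℝ) :
    2 * (u - 1) * exp ((u - 1) ^ 2) ≤ exp (u ^ 2) := by
  have hlin : 2 * (u - 1) ≤ exp (2 * u - 1) := by linarith [add_one_le_exp (2 * u - 1)]
  calc 2 * (u - 1) * exp ((u - 1) ^ 2) ≤ exp (2 * u - 1) * exp ((u - 1) ^ 2) :=
        mul_le_mul_of_nonneg_right hlin (exp_pos _).le
    _ = exp (u ^ 2) := by rw [← exp_add]; ring_nf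

lemma exp_sub_one_sq_sub_one_le_integral {x : ℝ} (hx : 1 ≤ x) :
    exp ((x - 1) ^ 2) - 1 ≤ ∫ u in (1:ℝ)..x, exp (u ^ 2) := by
  have hcont : Continuous fun u : ℝ => 2 * (u - 1) * exp ((u - 1) ^ 2) := by fun_prop
  have hftc : ∫ u in (1:ℝ)..x, 2 * (u - 1) * exp ((u - 1) ^ 2) = exp ((x - 1) ^ 2) - 1 := by
    rw [intervalIntegral.integral_eq_sub_of_hasDerivAt (fun u _ => hasDerivAt_exp_sub_one_sq u)
      (hcont.intervalIntegrable _ _)]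
    norm_num
  rw [← hftc]
  exact intervalIntegral.integral_mono_on hx (hcont.intervalIntegrable _ _)
    (continuous_exp_sq.intervalIntegrable _ _)
    fun u _ => two_mul_sub_one_mul_exp_sub_one_sq_le u

lemma exp_sub_one_sq_sub_one_le_erfi {x : ℝ} (hx : 1 ≤ x) : exp ((x - 1) ^ 2) - 1 ≤ erfi x := by
  have hsplit : erfi x = erfi 1 + ∫ u in (1:ℝ)..x, exp (u ^ 2) :=
    (intervalIntegral.integral_add_adjacent_intervals (continuous_exp_sq.intervalIntegrable _ _)
      (continuous_exp_sq.intervalIntegrable _ _)).symm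
  linarith [erfi_nonneg zero_le_one, exp_sub_one_sq_sub_one_le_integral hx]

lemma le_sqrt_log_of_exp_sq_le {a b : ℝ} (ha : 0 ≤ a) (h : exp (a ^ 2) ≤ b) :
    a ≤ √(log b) := by
  calc a = √(log (exp (a ^ 2))) := by rw [log_exp, sqrt_sq ha]
    _ ≤ √(log b) := sqrt_le_sqrt (log_le_log (exp_pos _) h)

theorem erfi_inv_le_general (x y : ℝ) (hxy : erfi x = y) :
    x ≤ 1 + Real.sqrt (Real.log (y + 1)) := by
  rcases le_or_gt x 1 with hx1 | hx1
  · linarith [sqrt_nonneg (log (y + 1))]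
  have hexp : exp ((x - 1) ^ 2) ≤ y + 1 := by
    linarith [exp_sub_one_sq_sub_one_le_erfi hx1.le]
  linarith [le_sqrt_log_of_exp_sq_le (by linarith) hexp]

theorem erfi_inv_le (x y : ℝ) (hx : 0 ≤ x) (hxy : erfi x = y) :
    x ≤ 1 + Real.sqrt (Real.log (y + 1)) :=
  erfi_inv_le_general x y hxy
end

section
/- Fix ε > 0 and α > 0. For every x > 0 and y ∈ ℝ: (i) the function t ↦ φ(x, t) has derivative ε·erfi(y/√(4·α·x)) at t = y; (ii) the function t ↦ ε·erfi(t/√(4·α·x)) has derivative (ε/(2·√(α·x)))·exp(y²/(4·α·x)) at t = y; (iii) the function s ↦ φ(s, y) has derivative −(ε·√α/(2·√x))·exp(y²/(4·α·x)) at s = x. Consequently ∂₁φ(x, y) + α·∂₂₂φ(x, y) = 0, i.e., φ satisfies the generalized Backward Heat Equation with diffusivity constant α. -/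
/-- The potential function `φ(x, y) = ε·√(α·x)·(2·∫₀^{y/√(4αx)} erfi(u) du − 1)`. -/
noncomputable def phi (ε α x y : ℝ) : ℝ :=
  ε * Real.sqrt (α * x) *
    (2 * (∫ u in (0:ℝ)..(y / Real.sqrt (4 * α * x)), erfi u) - 1)

/-!
Integrating by parts, `∫₀^w erfi = w erfi w - (exp w² - 1) / 2`, so with `r = √(αx)` and
`w = y / 2r` the potential is `φ = ε (y erfi w - r exp w²)`. Differentiating in `y` gives (i) and
(ii) at once. As a function of `r`, the two `y`-dependent contributions to the derivative cancel,
leaving `dφ/dr = -ε exp w²`; the chain rule with `dr/dx = α / 2r` then gives (iii), which is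
`-α` times (ii).
-/

open Real

lemma hasDerivAt_erfi (u : ℝ) : HasDerivAt erfi (exp (u ^ 2)) u :=
  ((by fun_prop : Continuous fun u : ℝ => exp (u ^ 2)).integral_hasStrictDerivAt 0 u).hasDerivAt

lemma continuous_erfi : Continuous erfi :=
  continuous_iff_continuousAt.2 fun u => (hasDerivAt_erfi u).continuousAt

@[simp] lemma erfi_zero : erfi 0 = 0 := intervalIntegral.integral_same

lemma hasDerivAt_erfi_div (c y : ℝ) :
    HasDerivAt (fun t => erfi (t / c)) (exp ((y / c) ^ 2) / c) y := by
  have h := (hasDerivAt_erfi (y / c)).comp y ((hasDerivAt_id' y).div_const c)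
  refine h.congr_deriv ?_
  ring

lemma integral_erfi (w : ℝ) :
    ∫ u in (0:ℝ)..w, erfi u = w * erfi w - (exp (w ^ 2) - 1) / 2 := by
  have hderiv (u : ℝ) :
      HasDerivAt (fun v => v * erfi v - (exp (v ^ 2) - 1) / 2) (erfi u) u :=
    (((hasDerivAt_id' u).mul (hasDerivAt_erfi u)).sub
      ((((hasDerivAt_pow 2 u).exp).sub_const 1).div_const 2)).congr_deriv (by push_cast; ring)
  rw [intervalIntegral.integral_eq_sub_of_hasDerivAt (fun u _ => hderiv u)
    (continuous_erfi.intervalIntegrable _ _)]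
  simp

/-- At `r = 0` both sides vanish, since then `y / (2 * r) = 0`. -/
lemma mul_two_mul_integral_erfi_sub_one (r y : ℝ) :
    r * (2 * (∫ u in (0:ℝ)..y / (2 * r), erfi u) - 1)
      = y * erfi (y / (2 * r)) - r * exp ((y / (2 * r)) ^ 2) := by
  rcases eq_or_ne r 0 with rfl | hr
  · simp
  · rw [integral_erfi]
    field_simp
    ring

lemma hasDerivAt_mul_two_mul_integral_erfi_sub_one {r : ℝ} (hr : r ≠ 0) (y : ℝ) :
    HasDerivAt (fun t => r * (2 * (∫ u in (0:ℝ)..t / (2 * r), erfi u) - 1))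
      (erfi (y / (2 * r))) y := by
  have hG := (continuous_erfi.integral_hasStrictDerivAt 0 (y / (2 * r))).hasDerivAt.comp y
    ((hasDerivAt_id' y).div_const (2 * r))
  exact (((hG.const_mul 2).sub_const 1).const_mul r).congr_deriv (by field_simp)

lemma hasDerivAt_erfi_potential_scale (y : ℝ) {r : ℝ} (hr : r ≠ 0) :
    HasDerivAt (fun r => y * erfi (y / (2 * r)) - r * exp ((y / (2 * r)) ^ 2))
      (-exp ((y / (2 * r)) ^ 2)) r := by
  have hw : HasDerivAt (fun r => y / (2 * r)) (-(y / (2 * r)) / r) r := by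
    have h := (hasDerivAt_const r y).div ((hasDerivAt_id' r).const_mul 2) (by simpa using hr)
    refine h.congr_deriv ?_
    field_simp
    ring
  have h := (((hasDerivAt_erfi _).comp r hw).const_mul y).sub
    ((hasDerivAt_id' r).mul ((hw.fun_pow 2).exp))
  refine h.congr_deriv ?_
  push_cast
  field_simp
  ring

lemma sqrt_four_mul_mul (α x : ℝ) : √(4 * α * x) = 2 * √(α * x) := by
  rw [mul_assoc, sqrt_mul zero_le_four, show (4 : ℝ) = 2 ^ 2 by norm_num, sqrt_sq zero_le_two]

lemma phi_eq_mul (ε α x y : ℝ) :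
    phi ε α x y = ε * (√(α * x) * (2 * (∫ u in (0:ℝ)..y / (2 * √(α * x)), erfi u) - 1)) := by
  rw [phi, sqrt_four_mul_mul, mul_assoc]

lemma div_sqrt_mul {α : ℝ} (hα : 0 ≤ α) (x : ℝ) : α / √(α * x) = √α / √x := by
  rw [sqrt_mul hα, ← div_div, div_sqrt]

theorem phi_derivs_and_BHE_general (ε α : ℝ) (hα : 0 < α)
    (x y : ℝ) (hx : 0 < x) :
    -- (i) ∂₂φ(x, y) = ε·erfi(y/√(4αx))
    HasDerivAt (fun t => phi ε α x t) (ε * erfi (y / Real.sqrt (4 * α * x))) y ∧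
    -- (ii) ∂₂₂φ(x, y) = (ε/(2√(αx)))·exp(y²/(4αx))
    HasDerivAt (fun t => ε * erfi (t / Real.sqrt (4 * α * x)))
      (ε / (2 * Real.sqrt (α * x)) * Real.exp (y ^ 2 / (4 * α * x))) y ∧
    -- (iii) ∂₁φ(x, y) = −(ε√α/(2√x))·exp(y²/(4αx))
    HasDerivAt (fun s => phi ε α s y)
      (-(ε * Real.sqrt α / (2 * Real.sqrt x)) * Real.exp (y ^ 2 / (4 * α * x))) x ∧
    -- consequently, ∂₁φ(x, y) + α·∂₂₂φ(x, y) = 0 (the generalized Backward Heat Equation)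
    -(ε * Real.sqrt α / (2 * Real.sqrt x)) * Real.exp (y ^ 2 / (4 * α * x))
      + α * (ε / (2 * Real.sqrt (α * x)) * Real.exp (y ^ 2 / (4 * α * x))) = 0 := by
  have hαx : 0 < α * x := mul_pos hα hx
  have hr : √(α * x) ≠ 0 := (sqrt_pos.2 hαx).ne'
  have hsq : (y / (2 * √(α * x))) ^ 2 = y ^ 2 / (4 * α * x) := by
    rw [div_pow, mul_pow, sq_sqrt hαx.le]; ring
  have hcoef : α / (2 * √(α * x)) = √α / (2 * √x) := by
    rw [mul_comm 2, ← div_div, div_sqrt_mul hα.le, div_div, mul_comm]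
  refine ⟨?_, ?_, ?_, ?_⟩
  · simp only [phi_eq_mul, sqrt_four_mul_mul]
    exact (hasDerivAt_mul_two_mul_integral_erfi_sub_one hr y).const_mul ε
  · rw [sqrt_four_mul_mul]
    exact ((hasDerivAt_erfi_div _ y).const_mul ε).congr_deriv (by rw [hsq]; ring)
  · have hs : HasDerivAt (fun s => √(α * s)) (α / (2 * √(α * x))) x :=
      (((hasDerivAt_id' x).const_mul α).sqrt hαx.ne').congr_deriv (by ring)
    simp only [phi_eq_mul, mul_two_mul_integral_erfi_sub_one]
    have h := ((hasDerivAt_erfi_potential_scale y hr).comp x hs).const_mul ε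
    refine h.congr_deriv ?_
    rw [hsq, hcoef]
    ring
  · rw [← mul_assoc, mul_div_left_comm, hcoef]; ring

theorem phi_derivs_and_BHE (ε α : ℝ) (hε : 0 < ε) (hα : 0 < α)
    (x y : ℝ) (hx : 0 < x) :
    -- (i) ∂₂φ(x, y) = ε·erfi(y/√(4αx))
    HasDerivAt (fun t => phi ε α x t) (ε * erfi (y / Real.sqrt (4 * α * x))) y ∧
    -- (ii) ∂₂₂φ(x, y) = (ε/(2√(αx)))·exp(y²/(4αx))
    HasDerivAt (fun t => ε * erfi (t / Real.sqrt (4 * α * x)))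
      (ε / (2 * Real.sqrt (α * x)) * Real.exp (y ^ 2 / (4 * α * x))) y ∧
    -- (iii) ∂₁φ(x, y) = −(ε√α/(2√x))·exp(y²/(4αx))
    HasDerivAt (fun s => phi ε α s y)
      (-(ε * Real.sqrt α / (2 * Real.sqrt x)) * Real.exp (y ^ 2 / (4 * α * x))) x ∧
    -- consequently, ∂₁φ(x, y) + α·∂₂₂φ(x, y) = 0 (the generalized Backward Heat Equation)
    -(ε * Real.sqrt α / (2 * Real.sqrt x)) * Real.exp (y ^ 2 / (4 * α * x))
      + α * (ε / (2 * Real.sqrt (α * x)) * Real.exp (y ^ 2 / (4 * α * x))) = 0 :=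
  phi_derivs_and_BHE_general ε α hα x y hx
end

section
/- Let ε > 0, α > 0, k > 0, h > 0 and z > k·h. Then for every V ≥ 0, the function S ↦ φ(V + z + k·S, S) is strictly convex on the interval [−h, ∞). (Note V + z + k·S ≥ z − k·h > 0 on this interval, so the expression is well defined.) -/
open Set

section Convexity

variable {E : Type*} [AddCommGroup E] [Module ℝ E]

noncomputable def perspective (g : E → ℝ) (p : ℝ × E) : ℝ := p.1 * g (p.1⁻¹ • p.2)

theorem convexOn_perspective {g : E → ℝ} (hg : ConvexOn ℝ univ g) :
    ConvexOn ℝ (Ioi 0 ×ˢ univ) (perspective g) := by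
  refine ⟨(convex_Ioi 0).prod convex_univ, ?_⟩
  rintro ⟨t₁, y₁⟩ ⟨ht₁ : 0 < t₁, -⟩ ⟨t₂, y₂⟩ ⟨ht₂ : 0 < t₂, -⟩ a b ha hb hab
  set t := a * t₁ + b * t₂
  have ht : 0 < t := by
    rcases ha.eq_or_lt with rfl | ha'
    · rw [zero_add] at hab
      simp [t, hab, ht₂]
    · positivity
  have hmix : t⁻¹ • (a • y₁ + b • y₂) =
      (a * t₁ / t) • (t₁⁻¹ • y₁) + (b * t₂ / t) • (t₂⁻¹ • y₂) := by
    simp only [smul_add, smul_smul]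
    congr 2 <;> field_simp
  have hg_mix := hg.2 (mem_univ (t₁⁻¹ • y₁)) (mem_univ (t₂⁻¹ • y₂))
    (by positivity : 0 ≤ a * t₁ / t) (by positivity : 0 ≤ b * t₂ / t)
    (by rw [← add_div, div_self ht.ne'])
  simp only [perspective, Prod.smul_mk, Prod.mk_add_mk, smul_eq_mul]
  rw [hmix]
  calc t * g ((a * t₁ / t) • (t₁⁻¹ • y₁) + (b * t₂ / t) • (t₂⁻¹ • y₂))
      ≤ t * ((a * t₁ / t) • g (t₁⁻¹ • y₁) + (b * t₂ / t) • g (t₂⁻¹ • y₂)) := by gcongr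
    _ = a * (t₁ * g (t₁⁻¹ • y₁)) + b * (t₂ * g (t₂⁻¹ • y₂)) := by
      simp only [smul_eq_mul]
      field_simp

theorem ConvexOn.strictConvexOn_comp_strictConcaveOn {s : Set E} {I : Set ℝ} {P : ℝ × E → ℝ}
    {T : E → ℝ} (hP : ConvexOn ℝ (I ×ˢ univ) P) (hP_anti : ∀ y, StrictAntiOn (fun t => P (t, y)) I)
    (hT : StrictConcaveOn ℝ s T) (hTs : MapsTo T s I) :
    StrictConvexOn ℝ s fun x => P (T x, x) := by
  refine ⟨hT.1, fun x hx y hy hxy a b ha hb hab => ?_⟩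
  have hmem : a • (T x, x) + b • (T y, y) ∈ I ×ˢ univ :=
    hP.1 ⟨hTs hx, mem_univ x⟩ ⟨hTs hy, mem_univ y⟩ ha.le hb.le hab
  simp only [Prod.smul_mk, Prod.mk_add_mk] at hmem
  calc P (T (a • x + b • y), a • x + b • y)
      < P (a • T x + b • T y, a • x + b • y) :=
        hP_anti _ hmem.1 (hTs (hT.1 hx hy ha.le hb.le hab)) (hT.2 hx hy hxy ha hb hab)
    _ = P (a • (T x, x) + b • (T y, y)) := by simp only [Prod.smul_mk, Prod.mk_add_mk]
    _ ≤ a • P (T x, x) + b • P (T y, y) :=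
        hP.2 ⟨hTs hx, mem_univ x⟩ ⟨hTs hy, mem_univ y⟩ ha.le hb.le hab

theorem StrictConvexOn.const_mul {s : Set E} {f : E → ℝ} {c : ℝ} (hc : 0 < c)
    (hf : StrictConvexOn ℝ s f) : StrictConvexOn ℝ s fun x => c * f x := by
  refine ⟨hf.1, fun x hx y hy hxy a b ha hb hab => ?_⟩
  have := mul_lt_mul_of_pos_left (hf.2 hx hy hxy ha hb hab) hc
  simp only [smul_eq_mul] at this ⊢
  linarith

end Convexity

theorem strictConcaveOn_sqrt_affine {s : Set ℝ} {c k : ℝ} (hs : Convex ℝ s) (hk : k ≠ 0)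
    (h : ∀ S ∈ s, 0 ≤ c + k * S) : StrictConcaveOn ℝ s fun S => √(c + k * S) := by
  refine ⟨hs, fun x hx y hy hxy a b ha hb hab => ?_⟩
  have hne : c + k * x ≠ c + k * y := by simpa [hk] using hxy
  have := Real.strictConcaveOn_sqrt.2 (h x hx) (h y hy) hne ha hb hab
  simp only [smul_eq_mul] at this ⊢
  convert this using 2
  linear_combination (-c) * hab

theorem hasDerivAt_erfi_s4 (x : ℝ) : HasDerivAt erfi (Real.exp (x ^ 2)) x := by
  have hc : Continuous fun u : ℝ => Real.exp (u ^ 2) := by fun_prop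
  exact intervalIntegral.integral_hasDerivAt_right (hc.intervalIntegrable _ _)
    (hc.stronglyMeasurableAtFilter _ _) hc.continuousAt

theorem differentiable_erfi : Differentiable ℝ erfi := fun x => (hasDerivAt_erfi_s4 x).differentiableAt

theorem strictMono_erfi : StrictMono erfi :=
  strictMono_of_deriv_pos fun x => (hasDerivAt_erfi_s4 x).deriv ▸ Real.exp_pos _

noncomputable def potentialProfile (w : ℝ) : ℝ := 2 * w * erfi w - Real.exp (w ^ 2)

theorem hasDerivAt_potentialProfile (w : ℝ) : HasDerivAt potentialProfile (2 * erfi w) w := by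
  refine ((((hasDerivAt_id w).const_mul 2).mul (hasDerivAt_erfi_s4 w)).sub
    (hasDerivAt_pow 2 w).exp).congr_deriv ?_
  simp only [id_eq, Nat.cast_ofNat]
  ring

theorem convexOn_potentialProfile : ConvexOn ℝ univ potentialProfile := by
  have hderiv : deriv potentialProfile = fun w => 2 * erfi w :=
    funext fun w => (hasDerivAt_potentialProfile w).deriv
  refine Monotone.convexOn_univ_of_deriv
    (fun w => (hasDerivAt_potentialProfile w).differentiableAt) ?_
  rw [hderiv]
  exact fun u v huv => mul_le_mul_of_nonneg_left (strictMono_erfi.monotone huv) zero_le_two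

theorem two_mul_integral_erfi (w : ℝ) :
    2 * ∫ u in (0 : ℝ)..w, erfi u = potentialProfile w + 1 := by
  rw [← intervalIntegral.integral_const_mul, intervalIntegral.integral_eq_sub_of_hasDerivAt
    (fun u _ => hasDerivAt_potentialProfile u)
    ((differentiable_erfi.continuous.const_mul 2).intervalIntegrable _ _)]
  simp [potentialProfile]

theorem hasDerivAt_perspective_potentialProfile {t : ℝ} (ht : 0 < t) (y : ℝ) :
    HasDerivAt (fun t => perspective potentialProfile (t, y)) (-Real.exp ((t⁻¹ * y) ^ 2)) t := by
  refine ((hasDerivAt_id t).mul ((hasDerivAt_potentialProfile (t⁻¹ * y)).comp t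
    ((hasDerivAt_inv ht.ne').mul_const y))).congr_deriv ?_
  simp only [potentialProfile, Function.comp_apply, id_eq]
  field_simp
  ring

theorem strictAntiOn_perspective_potentialProfile (y : ℝ) :
    StrictAntiOn (fun t => perspective potentialProfile (t, y)) (Ioi 0) := by
  refine strictAntiOn_of_deriv_neg (convex_Ioi 0) (fun t ht =>
    (hasDerivAt_perspective_potentialProfile ht y).continuousAt.continuousWithinAt) ?_
  intro t ht
  rw [interior_Ioi] at ht
  rw [(hasDerivAt_perspective_potentialProfile ht y).deriv]
  exact neg_neg_of_pos (Real.exp_pos _)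

theorem phi_eq_perspective (ε α x y : ℝ) :
    phi ε α x y = ε / 2 * perspective potentialProfile (√(4 * α * x), y) := by
  have hsqrt : √(4 * α * x) = 2 * √(α * x) := by
    rw [mul_assoc, Real.sqrt_mul (by norm_num), show (4 : ℝ) = 2 ^ 2 by norm_num,
      Real.sqrt_sq (by norm_num)]
  rw [phi, two_mul_integral_erfi, perspective, smul_eq_mul, hsqrt, div_eq_inv_mul]
  ring

theorem shifted_potential_strictConvexOn_general (ε α k h z : ℝ)
    (hε : 0 < ε) (hα : 0 < α) (hk : 0 < k) (hz : k * h < z)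
    (V : ℝ) (hV : 0 ≤ V) :
    StrictConvexOn ℝ (Set.Ici (-h)) (fun S => phi ε α (V + z + k * S) S) := by
  have hpos : ∀ S ∈ Ici (-h), 0 < 4 * α * (V + z) + 4 * α * k * S := fun S hS => by
    have : 0 < V + z + k * S := by nlinarith [mem_Ici.1 hS]
    nlinarith
  have hT : StrictConcaveOn ℝ (Ici (-h)) fun S => √(4 * α * (V + z) + 4 * α * k * S) :=
    strictConcaveOn_sqrt_affine (convex_Ici _) (by positivity) fun S hS => (hpos S hS).le
  have hT_pos : MapsTo (fun S => √(4 * α * (V + z) + 4 * α * k * S)) (Ici (-h)) (Ioi 0) :=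
    fun S hS => Real.sqrt_pos.2 (hpos S hS)
  refine (((convexOn_perspective convexOn_potentialProfile).strictConvexOn_comp_strictConcaveOn
    strictAntiOn_perspective_potentialProfile hT hT_pos).const_mul (half_pos hε)).congr
    fun S _ => ?_
  rw [phi_eq_perspective]
  ring_nf

/-- Convexity: the shifted potential `Φ(V, S) = φ(V + z + k·S, S)` is strictly
convex in `S` on `[−h, ∞)`. -/
theorem shifted_potential_strictConvexOn (ε α k h z : ℝ)
    (hε : 0 < ε) (hα : 0 < α) (hk : 0 < k) (hh : 0 < h) (hz : k * h < z)
    (V : ℝ) (hV : 0 ≤ V) :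
    StrictConvexOn ℝ (Set.Ici (-h)) (fun S => phi ε α (V + z + k * S) S) :=
  shifted_potential_strictConvexOn_general ε α k h z hε hα hk hz V hV
end

section
/- Let G > 0, α > 1/2 and z = ((12α + 4)/(2α − 1))·G². Then for all A ≥ 0 and all w ≥ −G: 4·G²·w²/(A + z + 2·G·w) + 8·α·G² − (4·α + 2)·G·w − (2·α − 1)·(A + z) ≤ 0. (Note A + z + 2·G·w ≥ z − 2·G² > 0 since (12α + 4)/(2α − 1) > 2 for α > 1/2, so the expression is well defined.) -/
/-!
Writing `B = A + z` and `D = B + 2Gw`, the expression equals `B²/D − 2α(D − 4G²)`.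
Since `w ≥ −G` gives `B ≤ D + 2G²`, it suffices that `(D + 2G²)² ≤ 2αD(D − 4G²)`, a quadratic
inequality in `D` which holds once `(2α − 1)D ≥ (8α + 6)G²`; the choice of `z` makes
`(2α − 1)z = (12α + 4)G²`, which gives exactly this lower bound on `D`.
-/

lemma sq_div_add_sub_eq (α B t c : ℝ) (h : B + t ≠ 0) :
    t ^ 2 / (B + t) + 2 * α * c - (2 * α + 1) * t - (2 * α - 1) * B
      = B ^ 2 / (B + t) - 2 * α * (B + t - c) := by
  field_simp
  ring

lemma add_sq_le_of_mul_le {α s D : ℝ} (hs : 0 ≤ s) (hα : 1 / 2 < α)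
    (hD : (8 * α + 6) * s ≤ (2 * α - 1) * D) :
    (D + 2 * s) ^ 2 ≤ 2 * α * D * (D - 4 * s) := by
  have hD2 : 2 * s ≤ D := by nlinarith
  have hgap : 2 * α * D * (D - 4 * s) - (D + 2 * s) ^ 2
      = D * ((2 * α - 1) * D - (8 * α + 6) * s) + 2 * s * (D - 2 * s) := by ring
  rw [← sub_nonneg, hgap]
  exact add_nonneg (mul_nonneg (by linarith) (sub_nonneg.2 hD))
    (mul_nonneg (by linarith) (sub_nonneg.2 hD2))

lemma sq_div_le_of_le {α s B D : ℝ} (hs : 0 < s) (hα : 1 / 2 < α)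
    (hD : (8 * α + 6) * s ≤ (2 * α - 1) * D) (hB₀ : 0 ≤ B) (hB : B ≤ D + 2 * s) :
    B ^ 2 / D ≤ 2 * α * (D - 4 * s) := by
  have hDpos : 0 < D := by nlinarith
  rw [div_le_iff₀ hDpos]
  calc B ^ 2 ≤ (D + 2 * s) ^ 2 := pow_le_pow_left₀ hB₀ hB 2
    _ ≤ 2 * α * D * (D - 4 * s) := add_sq_le_of_mul_le hs.le hα hD
    _ = 2 * α * (D - 4 * s) * D := by ring

/-- The inequality `◇ ≤ 0` verified in Case 2 of the proof of the one-step potential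
bound, with `A = V + c²`, `w = S + c`, `k = 2G` and `z = ((12α+4)/(2α−1))·G²`. -/
theorem diamond_nonpos (G α : ℝ) (hG : 0 < G) (hα : 1 / 2 < α)
    (A w : ℝ) (hA : 0 ≤ A) (hw : -G ≤ w) :
    4 * G ^ 2 * w ^ 2 / (A + ((12 * α + 4) / (2 * α - 1)) * G ^ 2 + 2 * G * w)
      + 8 * α * G ^ 2 - (4 * α + 2) * G * w
      - (2 * α - 1) * (A + ((12 * α + 4) / (2 * α - 1)) * G ^ 2) ≤ 0 := by
  have ha : 0 < 2 * α - 1 := by linarith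
  set z := (12 * α + 4) / (2 * α - 1) * G ^ 2 with hz_def
  have hz : (2 * α - 1) * z = (12 * α + 4) * G ^ 2 := by
    rw [hz_def]
    field_simp
  have hz₀ : 0 ≤ z := mul_nonneg (div_nonneg (by linarith) ha.le) (sq_nonneg G)
  have hGw : -G ^ 2 ≤ G * w := by nlinarith
  have hD : (8 * α + 6) * G ^ 2 ≤ (2 * α - 1) * (A + z + 2 * G * w) := by nlinarith
  have hB : A + z ≤ A + z + 2 * G * w + 2 * G ^ 2 := by linarith
  have hbound := sq_div_le_of_le (by positivity) hα hD (by positivity) hB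
  have hDne : A + z + 2 * G * w ≠ 0 := by nlinarith
  have hexpr := sq_div_add_sub_eq α (A + z) (2 * G * w) (4 * G ^ 2) hDne
  calc _ = (2 * G * w) ^ 2 / (A + z + 2 * G * w) + 2 * α * (4 * G ^ 2)
        - (2 * α + 1) * (2 * G * w) - (2 * α - 1) * (A + z) := by ring
    _ ≤ 0 := by linarith
end
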